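/- Let F be an asymmetric norm on ℝⁿ whose closed unit ball {y : F(y) ≤ 1} is a strictly convex set, let α ∈ ℝⁿ, and suppose the function α ↦ F_*(α)² is differentiable at α with gradient g. Then F(g) = 2 F_*(α). -/

import Mathlib

open scoped RealInnerProductSpace

/-- `ℝⁿ` with the Euclidean inner product. -/
abbrev En (n : ℕ) := EuclideanSpace ℝ (Fin n)

/-- An asymmetric norm on `ℝⁿ`. -/
def IsAsymNorm {n : ℕ} (F : En n → ℝ) : Prop :=
  (∀ y, 0 ≤ F y) ∧ (∀ y, F y = 0 ↔ y = 0) ∧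
  (∀ l : ℝ, 0 < l → ∀ y, F (l • y) = l * F y) ∧
  (∀ y₁ y₂, F (y₁ + y₂) ≤ F y₁ + F y₂)

/-- The dual asymmetric norm `F_*(α) = sup {⟨α, y⟩ : F y ≤ 1}`. -/
noncomputable def dualNorm {n : ℕ} (F : En n → ℝ) (α : En n) : ℝ :=
  sSup ((fun y => ⟪α, y⟫) '' {y | F y ≤ 1})

/-- The subdifferential of `F²` at `y`. -/
def subdiffSq {n : ℕ} (F : En n → ℝ) (y : En n) : Set (En n) :=
  {α | ∀ z, (F y) ^ 2 + ⟪α, z - y⟫ ≤ (F z) ^ 2}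

/-!
The unit ball of `F` is compact, so `F_*(α) = ⟪α, y⟫` for some `y` with `F y ≤ 1`. Then
`β ↦ 2 F_*(α) ⟪β, y⟫ - F_*(α)²` is an affine minorant of `F_*²` touching it at `α`, and a
function differentiable at `α` has no subgradient there other than its gradient, so
`g = 2 F_*(α) y`. Finally `F_*(α) F(y) = F_*(α)`, since `F_*(α) = ⟪α, y⟫ ≤ F_*(α) F(y)`.
-/

theorem HasGradientAt.eq_of_forall_add_inner_le {E : Type*} [NormedAddCommGroup E]
    [InnerProductSpace ℝ E] [CompleteSpace E] {f : E → ℝ} {g s x : E}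
    (hf : HasGradientAt f g x) (hs : ∀ y, f x + ⟪s, y - x⟫ ≤ f y) : s = g := by
  have hmin : IsLocalMin (fun y => f y - ⟪s, y - x⟫) x :=
    .of_forall fun y => by simp only [sub_self, inner_zero_right]; linarith [hs y]
  have hderiv : HasFDerivAt (fun y => f y - ⟪s, y - x⟫)
      (InnerProductSpace.toDual ℝ E (g - s)) x := by
    rw [map_sub]
    exact hf.hasFDerivAt.sub ((innerSL ℝ s).hasFDerivAt.comp x ((hasFDerivAt_id x).sub_const x))
  have hzero := hmin.hasFDerivAt_eq_zero hderiv
  rw [LinearIsometryEquiv.map_eq_zero_iff, sub_eq_zero] at hzero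
  exact hzero.symm

namespace IsAsymNorm

variable {n : ℕ} {F : En n → ℝ}

theorem map_zero (hF : IsAsymNorm F) : F 0 = 0 := (hF.2.1 0).mpr rfl

theorem pos_of_ne_zero (hF : IsAsymNorm F) {y : En n} (hy : y ≠ 0) : 0 < F y :=
  (hF.1 y).lt_of_ne fun h => hy ((hF.2.1 y).mp h.symm)

theorem map_nonneg_smul (hF : IsAsymNorm F) {l : ℝ} (hl : 0 ≤ l) (y : En n) :
    F (l • y) = l * F y := by
  rcases hl.eq_or_lt with rfl | hl
  · simp [hF.map_zero]
  · exact hF.2.2.1 l hl y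

theorem convexOn (hF : IsAsymNorm F) : ConvexOn ℝ Set.univ F :=
  ⟨convex_univ, fun x _ y _ a b ha hb _ => by
    simpa only [smul_eq_mul, hF.map_nonneg_smul ha, hF.map_nonneg_smul hb] using
      hF.2.2.2 (a • x) (b • y)⟩

theorem continuous (hF : IsAsymNorm F) : Continuous F :=
  continuousOn_univ.mp (hF.convexOn.continuousOn isOpen_univ)

theorem exists_pos_mul_norm_le (hF : IsAsymNorm F) : ∃ m > 0, ∀ y, m * ‖y‖ ≤ F y := by
  have hpos : ∀ y ∈ Metric.sphere (0 : En n) 1, 0 < F y := fun y hy =>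
    hF.pos_of_ne_zero (ne_zero_of_mem_unit_sphere ⟨y, hy⟩)
  obtain ⟨m, hm, hmF⟩ :=
    (isCompact_sphere 0 1).exists_forall_le' hF.continuous.continuousOn hpos
  refine ⟨m, hm, fun y => ?_⟩
  rcases eq_or_ne y 0 with rfl | hy
  · simp [hF.map_zero]
  have hny : 0 < ‖y‖ := norm_pos_iff.mpr hy
  have hunit : ‖y‖⁻¹ • y ∈ Metric.sphere (0 : En n) 1 := by
    simp [norm_smul, hny.ne']
  have := hmF _ hunit
  rw [hF.map_nonneg_smul (inv_nonneg.mpr hny.le)] at this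
  rwa [le_inv_mul_iff₀ hny, mul_comm] at this

theorem isCompact_unitBall (hF : IsAsymNorm F) : IsCompact {y | F y ≤ 1} := by
  obtain ⟨m, hm, hmF⟩ := hF.exists_pos_mul_norm_le
  refine Metric.isCompact_of_isClosed_isBounded (isClosed_le hF.continuous continuous_const) ?_
  refine (Metric.isBounded_iff_subset_closedBall 0).mpr ⟨m⁻¹, fun y hy => ?_⟩
  rw [Metric.mem_closedBall, dist_zero_right, ← mul_one m⁻¹, le_inv_mul_iff₀ hm]
  exact (hmF y).trans hy

theorem exists_inner_eq_dualNorm (hF : IsAsymNorm F) (α : En n) :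
    ∃ y, F y ≤ 1 ∧ ⟪α, y⟫ = dualNorm F α := by
  have hne : ((fun y => ⟪α, y⟫) '' {y | F y ≤ 1}).Nonempty :=
    ⟨0, 0, by simp [hF.map_zero]⟩
  exact ((hF.isCompact_unitBall.image (continuous_const.inner continuous_id)).sSup_mem hne)

theorem inner_le_dualNorm (hF : IsAsymNorm F) (α : En n) {y : En n} (hy : F y ≤ 1) :
    ⟪α, y⟫ ≤ dualNorm F α :=
  le_csSup (hF.isCompact_unitBall.image (continuous_const.inner continuous_id)).bddAbove
    ⟨y, hy, rfl⟩

theorem dualNorm_nonneg (hF : IsAsymNorm F) (α : En n) : 0 ≤ dualNorm F α := by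
  simpa using hF.inner_le_dualNorm α (y := 0) (by simp [hF.map_zero])

theorem inner_le_dualNorm_mul (hF : IsAsymNorm F) (α y : En n) :
    ⟪α, y⟫ ≤ dualNorm F α * F y := by
  rcases eq_or_ne y 0 with rfl | hy
  · simp [hF.map_zero]
  have hFy := hF.pos_of_ne_zero hy
  have := hF.inner_le_dualNorm α (y := (F y)⁻¹ • y)
    (by rw [hF.map_nonneg_smul (inv_nonneg.mpr hFy.le), inv_mul_cancel₀ hFy.ne'])
  rwa [real_inner_smul_right, inv_mul_le_iff₀ hFy, mul_comm] at this

theorem dualNorm_mul_eq_of_inner_eq (hF : IsAsymNorm F) {α y : En n} (hy : F y ≤ 1)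
    (hα : ⟪α, y⟫ = dualNorm F α) : dualNorm F α * F y = dualNorm F α :=
  le_antisymm (mul_le_of_le_one_right (hF.dualNorm_nonneg α) hy)
    (hα ▸ hF.inner_le_dualNorm_mul α y)

theorem sq_dualNorm_add_inner_le (hF : IsAsymNorm F) {α y : En n} (hy : F y ≤ 1)
    (hα : ⟪α, y⟫ = dualNorm F α) (β : En n) :
    dualNorm F α ^ 2 + ⟪(2 * dualNorm F α) • y, β - α⟫ ≤ dualNorm F β ^ 2 := by
  have hβ := hF.inner_le_dualNorm β hy
  rw [real_inner_smul_left, inner_sub_right, real_inner_comm β, real_inner_comm α, hα]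
  nlinarith [hF.dualNorm_nonneg α, sq_nonneg (dualNorm F β - dualNorm F α)]

end IsAsymNorm

theorem norm_gradient_dual_sq_general {n : ℕ} (F : En n → ℝ) (hF : IsAsymNorm F)
    (α : En n) (g : En n)
    (hg : HasGradientAt (fun β => (dualNorm F β) ^ 2) g α) :
    F g = 2 * dualNorm F α := by
  obtain ⟨y, hy, hα⟩ := hF.exists_inner_eq_dualNorm α
  have hgy : (2 * dualNorm F α) • y = g :=
    hg.eq_of_forall_add_inner_le (hF.sq_dualNorm_add_inner_le hy hα)
  rw [← hgy, hF.map_nonneg_smul (mul_nonneg zero_le_two (hF.dualNorm_nonneg α)), mul_assoc,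
    hF.dualNorm_mul_eq_of_inner_eq hy hα]

/-- If the unit ball of `F` is strictly convex and `F_*²` has gradient `g` at `α`,
then `F(g) = 2 F_*(α)`. -/
theorem norm_gradient_dual_sq {n : ℕ} (F : En n → ℝ) (hF : IsAsymNorm F)
    (hconv : StrictConvex ℝ {y : En n | F y ≤ 1})
    (α : En n) (g : En n)
    (hg : HasGradientAt (fun β => (dualNorm F β) ^ 2) g α) :
    F g = 2 * dualNorm F α :=
  norm_gradient_dual_sq_general F hF α g hg
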